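/- arXiv:1902.08407 — 3 statements merged into one kernel-verified Lean document; each statement's English description precedes it below -/
import Mathlib

section
/- Let x: [0,T] → ℝ² \ {0} be an H¹ loop (x(0) = x(T)) with nonzero winding number around the origin. Writing x(t) = ρ(t)e^{iθ(t)} in polar coordinates, one has ∫₀ᵀ |ẋ(t)|² dt ≥ (1/T)(x_M − x_m)² + (x_m²/T)(∫₀ᵀ |θ̇(t)| dt)², where x_M = max_{[0,T]} |x(t)| and x_m = min_{[0,T]} |x(t)|. -/
/-!
Write `ρ = ‖x‖`. Both `x` and `θ` are absolutely continuous, so at almost every `t` the product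
rule applied to `x = ρ e^{iθ}` gives `ẋ = (ρ̇ + iρθ̇) e^{iθ}`, whence
`‖ẋ‖² = ρ̇² + ρ²θ̇² ≥ ρ̇² + x_m²θ̇²`. The radius `ρ` is absolutely continuous as well, so
`x_M - x_m = ρ(t_M) - ρ(t_m) ≤ ∫|ρ̇|`, and the Cauchy–Schwarz inequality `(∫|f|)² ≤ T ∫ f²`
applied to `ρ̇` and to `θ̇` finishes the proof.
-/

open MeasureTheory Set

/-- `x : [0,T] → ℝ²` (modeled as `ℂ`) is `H¹` with (weak) derivative `x'`. -/
def IsH1 (T : ℝ) (x x' : ℝ → ℂ) : Prop :=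
  Continuous x ∧ IntervalIntegrable x' volume 0 T ∧
  IntervalIntegrable (fun t => ‖x' t‖ ^ 2) volume 0 T ∧
  ∀ t ∈ Set.Icc (0 : ℝ) T, x t = x 0 + ∫ s in (0 : ℝ)..t, x' s

/-- A real-valued `H¹` function `θ` with weak derivative `θ'` on `[0,T]`. -/
def IsH1Real (T : ℝ) (θ θ' : ℝ → ℝ) : Prop :=
  Continuous θ ∧ IntervalIntegrable θ' volume 0 T ∧
  ∀ t ∈ Set.Icc (0 : ℝ) T, θ t = θ 0 + ∫ s in (0 : ℝ)..t, θ' s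

open Filter Topology intervalIntegral
open scoped Interval

namespace AbsolutelyContinuousOnInterval

theorem of_dist_le {X Y : Type*} [PseudoMetricSpace X] [PseudoMetricSpace Y]
    {f : ℝ → X} {g : ℝ → Y} {a b : ℝ} (hg : AbsolutelyContinuousOnInterval g a b)
    (hfg : ∀ u ∈ uIcc a b, ∀ v ∈ uIcc a b, dist (f u) (f v) ≤ dist (g u) (g v)) :
    AbsolutelyContinuousOnInterval f a b := by
  refine squeeze_zero' (Eventually.of_forall fun E => Finset.sum_nonneg fun _ _ => dist_nonneg)
    ?_ hg
  filter_upwards [mem_inf_of_right (mem_principal_self _)] with E hE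
  exact Finset.sum_le_sum fun i hi => hfg _ (hE.1 i hi).1 _ (hE.1 i hi).2

theorem norm {F : Type*} [SeminormedAddCommGroup F] {f : ℝ → F} {a b : ℝ}
    (hf : AbsolutelyContinuousOnInterval f a b) :
    AbsolutelyContinuousOnInterval (fun t => ‖f t‖) a b :=
  hf.of_dist_le fun _ _ _ _ => (dist_norm_norm_le _ _).trans_eq (dist_eq_norm _ _).symm

theorem abs_sub_le_integral_abs_deriv {f : ℝ → ℝ} {a b c d : ℝ}
    (hf : AbsolutelyContinuousOnInterval f a b) (hc : c ∈ Icc a b) (hd : d ∈ Icc a b) :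
    |f d - f c| ≤ ∫ t in a..b, |deriv f t| := by
  have hab : a ≤ b := hc.1.trans hc.2
  have hsub : uIcc c d ⊆ uIcc a b := by
    rw [uIcc_of_le hab]; exact uIcc_subset_Icc hc hd
  rw [← (hf.mono hsub).integral_deriv_eq_sub]
  calc |∫ t in c..d, deriv f t|
    _ ≤ |∫ t in c..d, (|deriv f t|)| := by
      simpa only [Real.norm_eq_abs] using norm_integral_le_abs_integral_norm (f := deriv f)
    _ ≤ |∫ t in a..b, (|deriv f t|)| :=
      abs_integral_mono_interval (uIoc_subset_uIoc_of_uIcc_subset_uIcc hsub)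
        (Eventually.of_forall fun _ => abs_nonneg _) hf.intervalIntegrable_deriv.abs
    _ = ∫ t in a..b, |deriv f t| := abs_of_nonneg (integral_nonneg hab fun _ _ => abs_nonneg _)

end AbsolutelyContinuousOnInterval

section Primitive

variable {E : Type*} [NormedAddCommGroup E] [NormedSpace ℝ E]
  {f f' : ℝ → E} {a b : ℝ}

theorem absolutelyContinuousOnInterval_of_eq_add_integral (hab : a ≤ b)
    (hf' : IntervalIntegrable f' volume a b)
    (hf : ∀ t ∈ Icc a b, f t = f a + ∫ s in a..t, f' s) :
    AbsolutelyContinuousOnInterval f a b := by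
  have hnorm := hf'.norm.absolutelyContinuousOnInterval_intervalIntegral (c := a) left_mem_uIcc
  refine hnorm.of_dist_le fun u hu v hv => ?_
  have hint : ∀ w ∈ uIcc a b, IntervalIntegrable f' volume a w := fun w hw =>
    hf'.mono_set (uIcc_subset_uIcc left_mem_uIcc hw)
  rw [dist_eq_norm, dist_eq_norm, Real.norm_eq_abs, hf u (uIcc_of_le hab ▸ hu),
    hf v (uIcc_of_le hab ▸ hv), add_sub_add_left_eq_sub,
    integral_interval_sub_left (hint u hu) (hint v hv),
    integral_interval_sub_left (hint u hu).norm (hint v hv).norm]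
  exact norm_integral_le_abs_integral_norm

theorem ae_hasDerivAt_of_eq_add_integral [CompleteSpace E]
    (hf' : IntervalIntegrable f' volume a b)
    (hf : ∀ t ∈ Icc a b, f t = f a + ∫ s in a..t, f' s) :
    ∀ᵐ t, t ∈ Ioo a b → HasDerivAt f (f' t) t := by
  filter_upwards [hf'.ae_hasDerivAt_integral] with t ht hmem
  have hab : a ≤ b := hmem.1.le.trans hmem.2.le
  have hderiv := (ht (uIcc_of_le hab ▸ Ioo_subset_Icc_self hmem) a
    left_mem_uIcc).const_add (f a)
  refine hderiv.congr_of_eventuallyEq ?_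
  filter_upwards [Icc_mem_nhds hmem.1 hmem.2] with s hs using hf s hs

end Primitive

theorem IntervalIntegrable.sq_of_mul_sq_le {f g : ℝ → ℝ} {a b c : ℝ} (hc : 0 < c)
    (hf : IntervalIntegrable f volume a b) (hg : IntervalIntegrable g volume a b)
    (hfg : ∀ᵐ t ∂volume.restrict (Ι a b), c * f t ^ 2 ≤ g t) :
    IntervalIntegrable (fun t => f t ^ 2) volume a b := by
  refine (hg.const_mul c⁻¹).mono_fun (hf.def'.aestronglyMeasurable.pow 2) ?_
  filter_upwards [hfg] with t ht
  rw [Real.norm_of_nonneg (sq_nonneg _), Real.norm_eq_abs]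
  exact (le_inv_mul_iff₀ hc |>.2 ht).trans (le_abs_self _)

theorem sq_integral_abs_le_mul_integral_sq {f : ℝ → ℝ} {a b : ℝ} (hab : a ≤ b)
    (hf : IntervalIntegrable f volume a b)
    (hf2 : IntervalIntegrable (fun t => f t ^ 2) volume a b) :
    (∫ t in a..b, |f t|) ^ 2 ≤ (b - a) * ∫ t in a..b, f t ^ 2 := by
  have hquad : ∀ c : ℝ, 0 ≤ (b - a) * (c * c) + (-2 * ∫ t in a..b, |f t|) * c
      + ∫ t in a..b, f t ^ 2 := fun c => by
    have hexpand : (fun t => (|f t| - c) ^ 2) = fun t => f t ^ 2 - 2 * c * |f t| + c ^ 2 := by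
      ext t; rw [sub_sq, sq_abs]; ring
    have hnonneg : 0 ≤ ∫ t in a..b, (|f t| - c) ^ 2 :=
      integral_nonneg hab fun _ _ => sq_nonneg _
    rw [hexpand, integral_add (hf2.sub (hf.abs.const_mul _)) intervalIntegrable_const,
      integral_sub hf2 (hf.abs.const_mul _), intervalIntegral.integral_const_mul,
      intervalIntegral.integral_const, smul_eq_mul] at hnonneg
    linarith
  have := discrim_le_zero hquad
  rw [discrim] at this
  linarith

theorem div_sq_integral_abs_add_le_integral {r w g : ℝ → ℝ} {a b m : ℝ} (hab : a < b)
    (hm : 0 < m)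
    (hr : IntervalIntegrable r volume a b) (hw : IntervalIntegrable w volume a b)
    (hg : IntervalIntegrable g volume a b)
    (hrwg : ∀ᵐ t ∂volume.restrict (Ioo a b), r t ^ 2 + m ^ 2 * w t ^ 2 ≤ g t) :
    1 / (b - a) * (∫ t in a..b, |r t|) ^ 2 + m ^ 2 / (b - a) * (∫ t in a..b, |w t|) ^ 2
      ≤ ∫ t in a..b, g t := by
  have hL : 0 < b - a := sub_pos.2 hab
  have hrwg' : ∀ᵐ t ∂volume.restrict (Ι a b), r t ^ 2 + m ^ 2 * w t ^ 2 ≤ g t := by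
    rwa [uIoc_of_le hab.le, ← Measure.restrict_congr_set Ioo_ae_eq_Ioc]
  have hr2 := hr.sq_of_mul_sq_le one_pos hg <| hrwg'.mono fun t ht => by
    nlinarith [sq_nonneg (m * w t)]
  have hw2 := hw.sq_of_mul_sq_le (pow_pos hm 2) hg <| hrwg'.mono fun t ht => by
    nlinarith [sq_nonneg (r t)]
  have hcsr := sq_integral_abs_le_mul_integral_sq hab.le hr hr2
  have hcsw := sq_integral_abs_le_mul_integral_sq hab.le hw hw2
  calc _
    _ ≤ (∫ t in a..b, r t ^ 2) + m ^ 2 * ∫ t in a..b, w t ^ 2 := by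
      refine add_le_add ?_ ?_
      · rwa [one_div, inv_mul_le_iff₀ hL]
      · rw [div_mul_eq_mul_div, div_le_iff₀ hL]
        nlinarith [mul_le_mul_of_nonneg_left hcsw (sq_nonneg m)]
    _ = ∫ t in a..b, (r t ^ 2 + m ^ 2 * w t ^ 2) := by
      rw [integral_add hr2 (hw2.const_mul _), intervalIntegral.integral_const_mul]
    _ ≤ ∫ t in a..b, g t :=
      integral_mono_ae_restrict hab.le (hr2.add (hw2.const_mul _)) hg <| by
        rwa [← Measure.restrict_congr_set Ioo_ae_eq_Icc]

open Complex in
theorem norm_sq_eq_of_hasDerivAt_polar {x : ℝ → ℂ} {ρ θ : ℝ → ℝ} {x' : ℂ} {ρ' θ' s : ℝ}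
    (hx : HasDerivAt x x' s) (hρ : HasDerivAt ρ ρ' s) (hθ : HasDerivAt θ θ' s)
    (hpolar : x =ᶠ[𝓝 s] fun t => ρ t * exp (θ t * I)) :
    ‖x'‖ ^ 2 = ρ' ^ 2 + (ρ s * θ') ^ 2 := by
  have hphase : HasDerivAt (fun t => exp (θ t * I)) (θ' * I * exp (θ s * I)) s := by
    simpa [mul_comm] using ((hθ.ofReal_comp).mul_const I).cexp
  have hprod := (hρ.ofReal_comp).mul hphase
  have hx' : x' = (ρ' + (ρ s * θ' : ℝ) * I) * exp (θ s * I) := by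
    rw [hx.unique (hprod.congr_of_eventuallyEq hpolar)]
    push_cast; ring
  rw [hx', norm_mul, norm_exp_ofReal_mul_I, mul_one, norm_add_mul_I,
    Real.sq_sqrt (by positivity)]

theorem IsH1.ae_norm_sq_deriv_eq_polar {T : ℝ} {x x' : ℝ → ℂ} {θ θ' : ℝ → ℝ}
    (hx : IsH1 T x x') (hne : ∀ t ∈ Icc (0 : ℝ) T, x t ≠ 0) (hθ : IsH1Real T θ θ')
    (hpolar : ∀ t ∈ Icc (0 : ℝ) T,
      x t = (‖x t‖ : ℂ) * Complex.exp ((θ t : ℂ) * Complex.I)) :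
    ∀ᵐ t ∂volume.restrict (Ioo 0 T),
      ‖x' t‖ ^ 2 = deriv (fun s => ‖x s‖) t ^ 2 + (‖x t‖ * θ' t) ^ 2 := by
  rw [ae_restrict_iff' measurableSet_Ioo]
  filter_upwards [ae_hasDerivAt_of_eq_add_integral hx.2.1 hx.2.2.2,
    ae_hasDerivAt_of_eq_add_integral hθ.2.1 hθ.2.2] with t hxt hθt ht
  have hnorm :=
    ((hxt ht).differentiableAt.norm ℝ (hne t (Ioo_subset_Icc_self ht))).hasDerivAt
  exact norm_sq_eq_of_hasDerivAt_polar (ρ := fun s => ‖x s‖) (hxt ht) hnorm (hθt ht) <|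
    eventually_of_mem (Icc_mem_nhds ht.1 ht.2) hpolar

theorem kinetic_lower_bound_general (T : ℝ) (hT : 0 < T) (x x' : ℝ → ℂ) (θ θ' : ℝ → ℝ)
    (xM xm : ℝ)
    (hH1 : IsH1 T x x')
    (hne : ∀ t ∈ Set.Icc (0 : ℝ) T, x t ≠ 0)
    (hθ : IsH1Real T θ θ')
    (hpolar : ∀ t ∈ Set.Icc (0 : ℝ) T,
      x t = (‖x t‖ : ℂ) * Complex.exp ((θ t : ℂ) * Complex.I))
    (hM : IsGreatest ((fun t => ‖x t‖) '' Set.Icc (0 : ℝ) T) xM)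
    (hm : IsLeast ((fun t => ‖x t‖) '' Set.Icc (0 : ℝ) T) xm) :
    (1 / T) * (xM - xm) ^ 2 + (xm ^ 2 / T) * (∫ t in (0 : ℝ)..T, |θ' t|) ^ 2
      ≤ ∫ t in (0 : ℝ)..T, ‖x' t‖ ^ 2 := by
  have hρ := (absolutelyContinuousOnInterval_of_eq_add_integral hT.le hH1.2.1 hH1.2.2.2).norm
  obtain ⟨tm, htm, rfl⟩ := hm.1
  obtain ⟨tM, htM, rfl⟩ := hM.1
  have hxm : 0 < ‖x tm‖ := norm_pos_iff.2 (hne tm htm)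
  have hradial :
      (‖x tM‖ - ‖x tm‖) ^ 2 ≤ (∫ t in (0 : ℝ)..T, |deriv (fun s => ‖x s‖) t|) ^ 2 := by
    rw [← sq_abs]
    exact pow_le_pow_left₀ (abs_nonneg _) (hρ.abs_sub_le_integral_abs_deriv htm htM) 2
  have henergy : ∀ᵐ t ∂volume.restrict (Ioo 0 T),
      deriv (fun s => ‖x s‖) t ^ 2 + ‖x tm‖ ^ 2 * θ' t ^ 2 ≤ ‖x' t‖ ^ 2 := by
    filter_upwards [hH1.ae_norm_sq_deriv_eq_polar hne hθ hpolar,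
      ae_restrict_mem measurableSet_Ioo] with t hpol ht
    have hmin : ‖x tm‖ ≤ ‖x t‖ := hm.2 ⟨t, Ioo_subset_Icc_self ht, rfl⟩
    rw [hpol, mul_pow]
    gcongr
  calc _
    _ ≤ (1 / (T - 0)) * (∫ t in (0 : ℝ)..T, |deriv (fun s => ‖x s‖) t|) ^ 2
        + (‖x tm‖ ^ 2 / (T - 0)) * (∫ t in (0 : ℝ)..T, |θ' t|) ^ 2 := by
      rw [sub_zero]; gcongr
    _ ≤ ∫ t in (0 : ℝ)..T, ‖x' t‖ ^ 2 :=
      div_sq_integral_abs_add_le_integral hT hxm hρ.intervalIntegrable_deriv hθ.2.1 hH1.2.2.1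
        henergy

/-- For an `H¹` loop `x : [0,T] → ℝ² \ {0}` with nonzero winding number
around the origin, written in polar coordinates `x = ρ e^{iθ}`, one has
`∫₀ᵀ |ẋ|² ≥ (1/T)(x_M − x_m)² + (x_m²/T)(∫₀ᵀ |θ̇|)²`, where `x_M`, `x_m` are the maximum
and minimum of `|x|` on `[0,T]`. -/
theorem kinetic_lower_bound (T : ℝ) (hT : 0 < T) (x x' : ℝ → ℂ) (θ θ' : ℝ → ℝ)
    (xM xm : ℝ)
    (hH1 : IsH1 T x x') (hloop : x 0 = x T)
    (hne : ∀ t ∈ Set.Icc (0 : ℝ) T, x t ≠ 0)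
    (hθ : IsH1Real T θ θ')
    (hθint : IntervalIntegrable (fun t => |θ' t|) volume 0 T)
    (hpolar : ∀ t ∈ Set.Icc (0 : ℝ) T,
      x t = (‖x t‖ : ℂ) * Complex.exp ((θ t : ℂ) * Complex.I))
    (hwind : ∃ k : ℤ, k ≠ 0 ∧ θ T - θ 0 = 2 * Real.pi * (k : ℝ))
    (hM : IsGreatest ((fun t => ‖x t‖) '' Set.Icc (0 : ℝ) T) xM)
    (hm : IsLeast ((fun t => ‖x t‖) '' Set.Icc (0 : ℝ) T) xm) :
    (1 / T) * (xM - xm) ^ 2 + (xm ^ 2 / T) * (∫ t in (0 : ℝ)..T, |θ' t|) ^ 2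
      ≤ ∫ t in (0 : ℝ)..T, ‖x' t‖ ^ 2 :=
  kinetic_lower_bound_general T hT x x' θ θ' xM xm hH1 hne hθ hpolar hM hm
end

section
/- If x: [0,T] → ℝ² \ {0} is an H¹ loop with nonzero winding number around the origin, then ∫₀ᵀ |x(t)|² dt ≤ 2T² ∫₀ᵀ |ẋ(t)|² dt. -/
open MeasureTheory Set

/-- Cauchy–Schwarz for interval integrals: `(∫ g)² ≤ T ∫ g²`. -/
lemma cs_aux {T : ℝ} (hT : 0 < T) {g : ℝ → ℝ}
    (hg : IntervalIntegrable g volume 0 T)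
    (hg2 : IntervalIntegrable (fun t => g t ^ 2) volume 0 T) :
    (∫ t in (0:ℝ)..T, g t) ^ 2 ≤ T * ∫ t in (0:ℝ)..T, g t ^ 2 := by
  set A := ∫ t in (0:ℝ)..T, g t with hA
  set B := ∫ t in (0:ℝ)..T, g t ^ 2 with hB
  have key : (0:ℝ) ≤ ∫ t in (0:ℝ)..T, (T * g t - A) ^ 2 :=
    intervalIntegral.integral_nonneg hT.le (fun u _ => sq_nonneg _)
  have expand : (∫ t in (0:ℝ)..T, (T * g t - A) ^ 2)
      = T ^ 2 * B - 2 * T * A * A + A ^ 2 * T := by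
    have h1 : ∀ t : ℝ, (T * g t - A) ^ 2
        = T ^ 2 * g t ^ 2 - (2 * T * A) * g t + A ^ 2 := fun t => by ring
    simp_rw [h1]
    rw [intervalIntegral.integral_add
        (((hg2.const_mul (T ^ 2))).sub (hg.const_mul (2 * T * A)))
        intervalIntegrable_const,
      intervalIntegral.integral_sub (hg2.const_mul (T ^ 2)) (hg.const_mul (2 * T * A)),
      intervalIntegral.integral_const_mul, intervalIntegral.integral_const_mul,
      intervalIntegral.integral_const]
    simp only [smul_eq_mul, ← hA, ← hB]
    ring
  rw [expand] at key
  nlinarith [key, hT]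

/-- If `x : [0,T] → ℝ² \ {0}` is an `H¹` loop with nonzero winding number
around the origin, then `∫₀ᵀ |x|² ≤ 2T² ∫₀ᵀ |ẋ|²`. The winding number condition is expressed
via a continuous argument `θ` along `x` with `θ T − θ 0 = 2πk`, `k ≠ 0`. -/
theorem poincare_winding (T : ℝ) (hT : 0 < T) (x x' : ℝ → ℂ)
    (hH1 : IsH1 T x x') (hloop : x 0 = x T)
    (hne : ∀ t ∈ Set.Icc (0 : ℝ) T, x t ≠ 0)
    (θ : ℝ → ℝ) (hθc : ContinuousOn θ (Set.Icc 0 T))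
    (hpolar : ∀ t ∈ Set.Icc (0 : ℝ) T,
      x t = (‖x t‖ : ℂ) * Complex.exp ((θ t : ℂ) * Complex.I))
    (hwind : ∃ k : ℤ, k ≠ 0 ∧ θ T - θ 0 = 2 * Real.pi * (k : ℝ)) :
    ∫ t in (0 : ℝ)..T, ‖x t‖ ^ 2 ≤ 2 * T ^ 2 * ∫ t in (0 : ℝ)..T, ‖x' t‖ ^ 2 := by
  obtain ⟨hxc, hx'i, hx'2, hrep⟩ := hH1
  obtain ⟨k, hk, hθT⟩ := hwind
  set I := ∫ t in (0:ℝ)..T, ‖x' t‖ with hI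
  set E := ∫ t in (0:ℝ)..T, ‖x' t‖ ^ 2 with hE
  have hEnn : (0:ℝ) ≤ E :=
    intervalIntegral.integral_nonneg hT.le (fun u _ => sq_nonneg _)
  have hInn : (0:ℝ) ≤ I :=
    intervalIntegral.integral_nonneg hT.le (fun u _ => norm_nonneg _)
  have hπ : (0:ℝ) < Real.pi := Real.pi_pos
  -- gap between θ 0 and θ T
  have hgap : 2 * Real.pi ≤ |θ T - θ 0| := by
    rw [hθT, abs_mul, abs_of_nonneg (by positivity : (0:ℝ) ≤ 2 * Real.pi)]
    have h1 : (1:ℝ) ≤ |(k:ℝ)| := by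
      have := Int.one_le_abs hk
      calc (1:ℝ) ≤ (|k| : ℤ) := by exact_mod_cast this
        _ = |(k:ℝ)| := by push_cast; ring
    nlinarith
  -- pointwise bound
  have hpt : ∀ t ∈ Set.Icc (0:ℝ) T, ‖x t‖ ≤ I := by
    intro t ht
    set a := min (θ 0) (θ T) with ha
    set b := max (θ 0) (θ T) with hb
    have hb1 : θ 0 ≤ b := le_max_left _ _
    have hb2 : θ T ≤ b := le_max_right _ _
    have ha1 : a ≤ θ 0 := min_le_left _ _
    have ha2 : a ≤ θ T := min_le_right _ _
    have hba : 2 * Real.pi ≤ b - a := by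
      rcases abs_cases (θ T - θ 0) with ⟨h1, _⟩ | ⟨h1, _⟩ <;> rw [h1] at hgap <;> linarith
    set m : ℤ := ⌈(a - θ t - Real.pi) / (2 * Real.pi)⌉ with hm
    set c := θ t + Real.pi + 2 * Real.pi * (m:ℝ) with hc
    have h3 : (a - θ t - Real.pi) / (2 * Real.pi) * (2 * Real.pi)
        = a - θ t - Real.pi := div_mul_cancel₀ _ (by positivity)
    have hc1 : a ≤ c := by
      have h4 := Int.le_ceil ((a - θ t - Real.pi) / (2 * Real.pi))
      have h5 := mul_le_mul_of_nonneg_right h4 (by positivity : (0:ℝ) ≤ 2 * Real.pi)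
      rw [hc]; nlinarith
    have hc2 : c ≤ b := by
      have h4 : ((m:ℝ)) < (a - θ t - Real.pi) / (2 * Real.pi) + 1 := Int.ceil_lt_add_one _
      have h5 := mul_lt_mul_of_pos_right h4 (by positivity : (0:ℝ) < 2 * Real.pi)
      rw [hc]; nlinarith
    -- IVT gives an antipodal time s
    have hθc' : ContinuousOn θ (Set.uIcc 0 T) := by
      rwa [Set.uIcc_of_le hT.le]
    have hcmem : c ∈ Set.uIcc (θ 0) (θ T) := by
      rw [Set.uIcc]; exact ⟨hc1, hc2⟩
    obtain ⟨s, hs, hθs⟩ := intermediate_value_uIcc hθc' hcmem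
    rw [Set.uIcc_of_le hT.le] at hs
    -- x s is opposite in direction to x t
    have hxs : x s = -((‖x s‖ : ℂ) * Complex.exp ((θ t : ℂ) * Complex.I)) := by
      have hes : ((θ s : ℝ) : ℂ) * Complex.I
          = (θ t : ℂ) * Complex.I + Real.pi * Complex.I + (m:ℂ) * (2 * Real.pi * Complex.I) := by
        rw [hθs, hc]; push_cast; ring
      conv_lhs => rw [hpolar s hs]
      rw [hes, Complex.exp_add, Complex.exp_add, Complex.exp_pi_mul_I,
        Complex.exp_int_mul_two_pi_mul_I]
      ring
    have hdiff : x t - x s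
        = ((‖x t‖ + ‖x s‖ : ℝ) : ℂ) * Complex.exp ((θ t : ℂ) * Complex.I) := by
      conv_lhs => rw [hpolar t ht, hxs]
      push_cast; ring
    have hnorm : ‖x t - x s‖ = ‖x t‖ + ‖x s‖ := by
      rw [hdiff, norm_mul]
      have h1 : ‖Complex.exp ((θ t : ℂ) * Complex.I)‖ = 1 := Complex.norm_exp_ofReal_mul_I _
      have h2 : ‖((‖x t‖ + ‖x s‖ : ℝ) : ℂ)‖ = ‖x t‖ + ‖x s‖ := by
        rw [Complex.norm_real, Real.norm_of_nonneg (by positivity)]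
      rw [h1, h2, mul_one]
    -- x t - x s as an integral of x'
    have hint1 : IntervalIntegrable x' volume 0 t :=
      hx'i.mono_set (Set.uIcc_subset_uIcc (Set.left_mem_uIcc)
        (by rw [Set.uIcc_of_le hT.le]; exact ht))
    have hint2 : IntervalIntegrable x' volume 0 s :=
      hx'i.mono_set (Set.uIcc_subset_uIcc (Set.left_mem_uIcc)
        (by rw [Set.uIcc_of_le hT.le]; exact hs))
    have hxts : x t - x s = ∫ u in s..t, x' u := by
      rw [hrep t ht, hrep s hs,
        ← intervalIntegral.integral_interval_sub_left hint1 hint2]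
      ring
    -- bound the integral
    have hsub : Set.uIoc s t ⊆ Set.uIoc 0 T := by
      intro u hu
      rw [Set.uIoc_of_le hT.le]
      rcases Set.mem_uIoc.mp hu with ⟨h1, h2⟩ | ⟨h1, h2⟩
      · exact ⟨lt_of_le_of_lt hs.1 h1, h2.trans ht.2⟩
      · exact ⟨lt_of_le_of_lt ht.1 h1, h2.trans hs.2⟩
    have hbound : ‖x t - x s‖ ≤ I := by
      rw [hxts]
      calc ‖∫ u in s..t, x' u‖ ≤ |∫ u in s..t, ‖x' u‖| :=
            intervalIntegral.norm_integral_le_abs_integral_norm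
        _ ≤ |I| := intervalIntegral.abs_integral_mono_interval hsub
            (Filter.Eventually.of_forall fun u => norm_nonneg _) hx'i.norm
        _ = I := abs_of_nonneg hInn
    calc ‖x t‖ ≤ ‖x t‖ + ‖x s‖ := le_add_of_nonneg_right (norm_nonneg _)
      _ = ‖x t - x s‖ := hnorm.symm
      _ ≤ I := hbound
  -- Cauchy–Schwarz
  have hcs : I ^ 2 ≤ T * E := cs_aux hT hx'i.norm hx'2
  -- integrate the pointwise bound
  have hxint : IntervalIntegrable (fun t => ‖x t‖ ^ 2) volume 0 T :=
    ((hxc.norm.pow 2)).intervalIntegrable 0 T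
  calc ∫ t in (0:ℝ)..T, ‖x t‖ ^ 2 ≤ ∫ _ in (0:ℝ)..T, T * E := by
        refine intervalIntegral.integral_mono_on hT.le hxint intervalIntegrable_const ?_
        intro u hu
        have h1 := hpt u hu
        nlinarith [norm_nonneg (x u)]
    _ = T * (T * E) := by rw [intervalIntegral.integral_const]; simp
    _ ≤ 2 * T ^ 2 * E := by nlinarith
end

section
/- There exists K > 0 (one may take K = 2T²) such that for every x in 𝒳 = 𝒳_c ∪ 𝒳_r, ∫₀ᵀ |x(t)|² dt ≤ K ∫₀ᵀ |ẋ(t)|² dt. -/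
open MeasureTheory Set

/-- `x` has nonzero winding number around the origin on `[0,T]`: there is a continuous
argument `θ` along `x` with `θ T − θ 0 = 2πk` for some nonzero integer `k`. -/
def Winds (T : ℝ) (x : ℝ → ℂ) : Prop :=
  ∃ θ : ℝ → ℝ, ContinuousOn θ (Set.Icc 0 T) ∧
    (∀ t ∈ Set.Icc (0 : ℝ) T,
      x t = (‖x t‖ : ℂ) * Complex.exp ((θ t : ℂ) * Complex.I)) ∧
    ∃ k : ℤ, k ≠ 0 ∧ θ T - θ 0 = 2 * Real.pi * (k : ℝ)

/-- `x` belongs to `𝒳 = 𝒳_c ∪ 𝒳_r`: either it touches the origin, or it avoids the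
origin and has nonzero winding number around it. -/
def MemX (T : ℝ) (x : ℝ → ℂ) : Prop :=
  (∃ t₀ ∈ Set.Icc (0 : ℝ) T, x t₀ = 0) ∨
    ((∀ t ∈ Set.Icc (0 : ℝ) T, x t ≠ 0) ∧ Winds T x)

/-! If `x ∈ 𝒳`, some chord `[x s, x t]` of the loop passes through the origin: trivially
when `x` meets the origin, and otherwise because a continuous argument of `x` whose total
change is a nonzero multiple of `2π` must change by exactly `π` somewhere. With
`L = ∫₀ᵀ |ẋ|`, any two values of `x` are within `L` of each other, so `|x s| + |x t| ≤ L`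
and hence `|x| ≤ 3L/2` everywhere. Cauchy–Schwarz, `L² ≤ T ∫₀ᵀ |ẋ|²`, then gives the
inequality with `K = 9T²/4`. -/

lemma exists_abs_sub_eq_of_le_abs_sub {θ : ℝ → ℝ} {a b c : ℝ} (hab : a ≤ b)
    (hθ : ContinuousOn θ (Icc a b)) (hc₀ : 0 ≤ c) (hc : c ≤ |θ b - θ a|) :
    ∃ t ∈ Icc a b, |θ t - θ a| = c := by
  have hg : ContinuousOn (fun t => |θ t - θ a|) (Icc a b) :=
    (hθ.sub continuousOn_const).abs
  exact intermediate_value_Icc hab hg ⟨by simpa using hc₀, hc⟩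

lemma Complex.exp_mul_I_eq_neg_of_abs_sub_eq_pi {θ φ : ℝ} (h : |θ - φ| = Real.pi) :
    Complex.exp (θ * Complex.I) = -Complex.exp (φ * Complex.I) := by
  have hexp : Complex.exp ((θ - φ : ℝ) * Complex.I) = -1 := by
    rcases abs_eq Real.pi_pos.le |>.mp h with h | h <;> rw [h]
    · exact Complex.exp_pi_mul_I
    · push_cast; rw [neg_mul]; exact Complex.exp_neg_pi_mul_I
  calc Complex.exp (θ * Complex.I)
      = Complex.exp ((θ - φ : ℝ) * Complex.I) * Complex.exp (φ * Complex.I) := by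
        rw [← Complex.exp_add]; push_cast; ring_nf
    _ = -Complex.exp (φ * Complex.I) := by rw [hexp, neg_one_mul]

lemma Complex.norm_sub_eq_add_of_polar {z w : ℂ} {θ φ : ℝ}
    (hz : z = ‖z‖ * Complex.exp (θ * Complex.I))
    (hw : w = ‖w‖ * Complex.exp (φ * Complex.I))
    (h : |θ - φ| = Real.pi) : ‖z - w‖ = ‖z‖ + ‖w‖ := by
  have hzw : z - w = -(((‖z‖ + ‖w‖ : ℝ) : ℂ) * Complex.exp (φ * Complex.I)) := by
    conv_lhs => rw [hz, hw, Complex.exp_mul_I_eq_neg_of_abs_sub_eq_pi h]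
    push_cast; ring
  rw [hzw, norm_neg, norm_mul, Complex.norm_exp_ofReal_mul_I, mul_one, Complex.norm_real,
    Real.norm_of_nonneg (by positivity)]

lemma Winds.exists_norm_sub_eq_add {T : ℝ} {x : ℝ → ℂ} (hx : Winds T x) (hT : 0 ≤ T) :
    ∃ t ∈ Icc 0 T, ‖x 0 - x t‖ = ‖x 0‖ + ‖x t‖ := by
  obtain ⟨θ, hθ, hpolar, k, hk, hwind⟩ := hx
  have hπ : Real.pi ≤ |θ T - θ 0| := by
    have : (1 : ℝ) ≤ |(k : ℝ)| := by exact_mod_cast Int.one_le_abs hk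
    rw [hwind, abs_mul, abs_of_pos Real.two_pi_pos]
    nlinarith [Real.pi_pos]
  obtain ⟨t, ht, hθt⟩ := exists_abs_sub_eq_of_le_abs_sub hT hθ Real.pi_pos.le hπ
  refine ⟨t, ht, Complex.norm_sub_eq_add_of_polar (hpolar 0 ⟨le_rfl, hT⟩) (hpolar t ht) ?_⟩
  rwa [abs_sub_comm]

lemma MemX.exists_norm_sub_eq_add {T : ℝ} {x : ℝ → ℂ} (hx : MemX T x) (hT : 0 ≤ T) :
    ∃ s ∈ Icc 0 T, ∃ t ∈ Icc 0 T, ‖x s - x t‖ = ‖x s‖ + ‖x t‖ := by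
  rcases hx with ⟨s, hs, hxs⟩ | ⟨-, hwinds⟩
  · exact ⟨s, hs, s, hs, by simp [hxs]⟩
  · exact ⟨0, ⟨le_rfl, hT⟩, hwinds.exists_norm_sub_eq_add hT⟩

lemma norm_sub_le_integral_norm_of_eq_integral {E : Type*} [NormedAddCommGroup E]
    [NormedSpace ℝ E] {x x' : ℝ → E} {T : ℝ} (hx' : IntervalIntegrable x' volume 0 T)
    (hx : ∀ t ∈ Icc 0 T, x t = x 0 + ∫ u in (0 : ℝ)..t, x' u)
    {s t : ℝ} (hs : s ∈ Icc 0 T) (ht : t ∈ Icc 0 T) :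
    ‖x t - x s‖ ≤ ∫ u in (0 : ℝ)..T, ‖x' u‖ := by
  have hsub : ∀ r ∈ Icc 0 T, IntervalIntegrable x' volume 0 r := fun r hr =>
    hx'.mono_set <| uIcc_subset_uIcc left_mem_uIcc <| by
      simpa [uIcc_of_le (hr.1.trans hr.2)] using hr
  have hT : 0 ≤ T := hs.1.trans hs.2
  calc ‖x t - x s‖ = ‖∫ u in s..t, x' u‖ := by
        rw [hx t ht, hx s hs, add_sub_add_left_eq_sub,
          intervalIntegral.integral_interval_sub_left (hsub t ht) (hsub s hs)]
    _ ≤ ∫ u in uIoc s t, ‖x' u‖ := intervalIntegral.norm_integral_le_integral_norm_uIoc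
    _ ≤ ∫ u in Ioc 0 T, ‖x' u‖ := by
        refine setIntegral_mono_set
          ((intervalIntegrable_iff_integrableOn_Ioc_of_le hT).mp hx'.norm)
          (ae_of_all _ fun _ => norm_nonneg _)
          (ae_of_all _ (Ioc_subset_Ioc (le_min hs.1 ht.1) (max_le hs.2 ht.2)))
    _ = ∫ u in (0 : ℝ)..T, ‖x' u‖ := (intervalIntegral.integral_of_le hT).symm

lemma sq_integral_le_mul_integral_sq {g : ℝ → ℝ} {a b : ℝ} (hab : a < b)
    (hg : IntervalIntegrable g volume a b)
    (hg2 : IntervalIntegrable (fun t => g t ^ 2) volume a b) :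
    (∫ t in a..b, g t) ^ 2 ≤ (b - a) * ∫ t in a..b, g t ^ 2 := by
  set I := ∫ t in a..b, g t
  set J := ∫ t in a..b, g t ^ 2
  have hvar : 0 ≤ ∫ t in a..b, ((b - a) * g t - I) ^ 2 :=
    intervalIntegral.integral_nonneg hab.le fun _ _ => sq_nonneg _
  have hexpand : ∫ t in a..b, ((b - a) * g t - I) ^ 2 = (b - a) * ((b - a) * J - I ^ 2) := by
    have hpoly : (fun t => ((b - a) * g t - I) ^ 2)
        = fun t => (b - a) ^ 2 * g t ^ 2 - 2 * (b - a) * I * g t + I ^ 2 := by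
      ext; ring
    rw [hpoly, intervalIntegral.integral_add ((hg2.const_mul _).sub (hg.const_mul _))
      intervalIntegrable_const, intervalIntegral.integral_sub (hg2.const_mul _) (hg.const_mul _),
      intervalIntegral.integral_const_mul, intervalIntegral.integral_const_mul,
      intervalIntegral.integral_const, smul_eq_mul]
    ring
  nlinarith [sub_pos.mpr hab]

/-- There is `K > 0` (one may take `K = 2T²`) such that the Poincaré-type
inequality `∫₀ᵀ |x|² ≤ K ∫₀ᵀ |ẋ|²` holds for every `H¹` loop `x ∈ 𝒳 = 𝒳_c ∪ 𝒳_r`. -/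
theorem poincare_on_X (T : ℝ) (hT : 0 < T) :
    ∃ K > 0, ∀ x x' : ℝ → ℂ, IsH1 T x x' → x 0 = x T → MemX T x →
      ∫ t in (0 : ℝ)..T, ‖x t‖ ^ 2 ≤ K * ∫ t in (0 : ℝ)..T, ‖x' t‖ ^ 2 := by
  refine ⟨9 * T ^ 2 / 4, by positivity, ?_⟩
  rintro x x' ⟨hx, hx', hx'_sq, hx_eq⟩ - hX
  set L := ∫ t in (0 : ℝ)..T, ‖x' t‖
  obtain ⟨s, hs, t, ht, hchord⟩ := hX.exists_norm_sub_eq_add hT.le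
  have hdist {r r'} (hr : r ∈ Icc 0 T) (hr' : r' ∈ Icc 0 T) : ‖x r' - x r‖ ≤ L :=
    norm_sub_le_integral_norm_of_eq_integral hx' hx_eq hr hr'
  have hsup (r) (hr : r ∈ Icc 0 T) : 2 * ‖x r‖ ≤ 3 * L := by
    linarith [norm_le_insert' (x r) (x s), norm_le_insert' (x r) (x t),
      hdist hs hr, hdist ht hr, hdist ht hs]
  have hL : L ^ 2 ≤ T * ∫ t in (0 : ℝ)..T, ‖x' t‖ ^ 2 := by
    simpa using sq_integral_le_mul_integral_sq hT hx'.norm hx'_sq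
  calc ∫ r in (0 : ℝ)..T, ‖x r‖ ^ 2 ≤ ∫ _ in (0 : ℝ)..T, (3 * L / 2) ^ 2 :=
        intervalIntegral.integral_mono_on hT.le ((hx.norm.pow 2).intervalIntegrable 0 T)
          intervalIntegrable_const fun r hr => by nlinarith [hsup r hr, norm_nonneg (x r)]
    _ = 9 / 4 * (T * L ^ 2) := by
        rw [intervalIntegral.integral_const, smul_eq_mul, sub_zero]; ring
    _ ≤ 9 * T ^ 2 / 4 * ∫ t in (0 : ℝ)..T, ‖x' t‖ ^ 2 := by nlinarith
end
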